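/- Let 𝔪, a, r, θ be real numbers with ϱ² := r² + a²cos²θ > 0 and sin θ ≠ 0 (no condition on Δ := r² − 2𝔪r + a²). Let B be the 4×4 real symmetric matrix B = (Δ/ϱ²)·u uᵀ − u e₁ᵀ − e₁ uᵀ − ϱ²·e₂ e₂ᵀ − (sin²θ/ϱ²)·w wᵀ, where u = (1, 0, 0, −a sin²θ)ᵀ, w = (a, 0, 0, −(r²+a²))ᵀ, e₁ = (0,1,0,0)ᵀ, e₂ = (0,0,1,0)ᵀ. Then B is congruent to diag(1, −1, −1, −1): there exists an invertible real 4×4 matrix P with Pᵀ B P = diag(1, −1, −1, −1). Thus the Kerr metric in the coordinates (t_*, r, θ, φ_*) is a Lorentzian metric of signature (+,−,−,−) across and beyond the event horizon. -/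

import Mathlib

open Matrix Real

/-- The coordinate matrix of the Kerr metric in the regular coordinates
`(t_*, r, θ, φ_*)`, smooth across the event horizon. -/
noncomputable def kerrStar (𝔪 a r θ : ℝ) : Matrix (Fin 4) (Fin 4) ℝ :=
  let Δ : ℝ := r ^ 2 - 2 * 𝔪 * r + a ^ 2
  let ϱ2 : ℝ := r ^ 2 + a ^ 2 * Real.cos θ ^ 2
  let u : Fin 4 → ℝ := ![1, 0, 0, -(a * Real.sin θ ^ 2)]
  let w : Fin 4 → ℝ := ![a, 0, 0, -(r ^ 2 + a ^ 2)]
  let e1 : Fin 4 → ℝ := ![0, 1, 0, 0]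
  let e2 : Fin 4 → ℝ := ![0, 0, 1, 0]
  (Δ / ϱ2) • vecMulVec u u - vecMulVec u e1 - vecMulVec e1 u
    - ϱ2 • vecMulVec e2 e2 - (Real.sin θ ^ 2 / ϱ2) • vecMulVec w w

/-- Congruence of an outer product. -/
theorem kerr_congr_vecMulVec {n : Type*} [Fintype n] [DecidableEq n]
    (P : Matrix n n ℝ) (u v : n → ℝ) :
    Pᵀ * vecMulVec u v * P = vecMulVec (u ᵥ* P) (v ᵥ* P) := by
  ext i j
  simp only [Matrix.mul_apply, Matrix.vecMulVec_apply, Matrix.transpose_apply,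
    Matrix.vecMul, dotProduct, Finset.sum_mul, Finset.mul_sum]
  exact Finset.sum_congr rfl fun k _ => Finset.sum_congr rfl fun l _ => by ring

/-- The first congruence matrix. -/
noncomputable def kerrP1 (𝔪 a r θ : ℝ) : Matrix (Fin 4) (Fin 4) ℝ :=
  let Δ : ℝ := r ^ 2 - 2 * 𝔪 * r + a ^ 2
  let ϱ2 : ℝ := r ^ 2 + a ^ 2 * Real.cos θ ^ 2
  !![1 + a ^ 2 * Real.sin θ ^ 2 / ϱ2, 1 + a ^ 2 * Real.sin θ ^ 2 / ϱ2, 0,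
       a * Real.sin θ ^ 2;
     (Δ / ϱ2 - 1) / 2, (Δ / ϱ2 + 1) / 2, 0, 0;
     0, 0, 1, 0;
     a / ϱ2, a / ϱ2, 0, 1]

set_option maxHeartbeats 1000000 in
theorem kerrP1_congr (𝔪 a r θ : ℝ)
    (hϱ : 0 < r ^ 2 + a ^ 2 * Real.cos θ ^ 2) :
    (kerrP1 𝔪 a r θ)ᵀ * kerrStar 𝔪 a r θ * kerrP1 𝔪 a r θ
      = Matrix.diagonal ![(1 : ℝ), -1, -(r ^ 2 + a ^ 2 * Real.cos θ ^ 2),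
          -(Real.sin θ ^ 2 * (r ^ 2 + a ^ 2 * Real.cos θ ^ 2))] := by
  have hcos : Real.cos θ ^ 2 = 1 - Real.sin θ ^ 2 := by
    have := Real.sin_sq_add_cos_sq θ; linarith
  have hρ : r ^ 2 + a ^ 2 * Real.cos θ ^ 2 ≠ 0 := ne_of_gt hϱ
  have hρ' : r ^ 2 + a ^ 2 * (1 - Real.sin θ ^ 2) ≠ 0 := by rw [← hcos]; exact hρ
  have hu : ![(1 : ℝ), 0, 0, -(a * Real.sin θ ^ 2)] ᵥ* kerrP1 𝔪 a r θ
      = ![1, 1, 0, 0] := by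
    funext i; fin_cases i <;>
      simp [kerrP1, Matrix.vecMul, dotProduct, Fin.sum_univ_four] <;>
      field_simp <;> ring
  have he1 : ![(0 : ℝ), 1, 0, 0] ᵥ* kerrP1 𝔪 a r θ
      = ![((r ^ 2 - 2 * 𝔪 * r + a ^ 2) / (r ^ 2 + a ^ 2 * Real.cos θ ^ 2) - 1) / 2,
          ((r ^ 2 - 2 * 𝔪 * r + a ^ 2) / (r ^ 2 + a ^ 2 * Real.cos θ ^ 2) + 1) / 2,
          0, 0] := by
    funext i; fin_cases i <;>
      simp [kerrP1, Matrix.vecMul, dotProduct, Fin.sum_univ_four]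
  have he2 : ![(0 : ℝ), 0, 1, 0] ᵥ* kerrP1 𝔪 a r θ = ![0, 0, 1, 0] := by
    funext i; fin_cases i <;>
      simp [kerrP1, Matrix.vecMul, dotProduct, Fin.sum_univ_four]
  have hw : ![a, 0, 0, -(r ^ 2 + a ^ 2)] ᵥ* kerrP1 𝔪 a r θ
      = ![0, 0, 0, -(r ^ 2 + a ^ 2 * Real.cos θ ^ 2)] := by
    funext i; fin_cases i <;>
      simp [kerrP1, Matrix.vecMul, dotProduct, Fin.sum_univ_four] <;>
      (try rw [hcos]) <;> (try field_simp) <;> (try ring)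
  have expand : (kerrP1 𝔪 a r θ)ᵀ * kerrStar 𝔪 a r θ * kerrP1 𝔪 a r θ
      = ((r ^ 2 - 2 * 𝔪 * r + a ^ 2) / (r ^ 2 + a ^ 2 * Real.cos θ ^ 2)) •
          vecMulVec (![(1 : ℝ), 0, 0, -(a * Real.sin θ ^ 2)] ᵥ* kerrP1 𝔪 a r θ)
            (![(1 : ℝ), 0, 0, -(a * Real.sin θ ^ 2)] ᵥ* kerrP1 𝔪 a r θ)
        - vecMulVec (![(1 : ℝ), 0, 0, -(a * Real.sin θ ^ 2)] ᵥ* kerrP1 𝔪 a r θ)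
            (![(0 : ℝ), 1, 0, 0] ᵥ* kerrP1 𝔪 a r θ)
        - vecMulVec (![(0 : ℝ), 1, 0, 0] ᵥ* kerrP1 𝔪 a r θ)
            (![(1 : ℝ), 0, 0, -(a * Real.sin θ ^ 2)] ᵥ* kerrP1 𝔪 a r θ)
        - (r ^ 2 + a ^ 2 * Real.cos θ ^ 2) •
            vecMulVec (![(0 : ℝ), 0, 1, 0] ᵥ* kerrP1 𝔪 a r θ)
              (![(0 : ℝ), 0, 1, 0] ᵥ* kerrP1 𝔪 a r θ)
        - (Real.sin θ ^ 2 / (r ^ 2 + a ^ 2 * Real.cos θ ^ 2)) •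
            vecMulVec (![a, 0, 0, -(r ^ 2 + a ^ 2)] ᵥ* kerrP1 𝔪 a r θ)
              (![a, 0, 0, -(r ^ 2 + a ^ 2)] ᵥ* kerrP1 𝔪 a r θ) := by
    simp only [kerrStar, Matrix.mul_sub, Matrix.sub_mul, Matrix.mul_smul,
      Matrix.smul_mul, kerr_congr_vecMulVec]
  rw [expand, hu, he1, he2, hw]
  ext i j
  fin_cases i <;> fin_cases j <;>
    simp [Matrix.vecMulVec_apply, Matrix.diagonal] <;>
    (try field_simp) <;> (try ring)

/-- The Kerr metric in the regular coordinates `(t_*, r, θ, φ_*)` is Lorentzian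
of signature `(+,−,−,−)` across and beyond the event horizon: its coordinate
matrix is congruent to `diag(1, −1, −1, −1)`, with no condition on `Δ`. -/
theorem kerrStar_lorentzian_signature (𝔪 a r θ : ℝ)
    (hϱ : 0 < r ^ 2 + a ^ 2 * Real.cos θ ^ 2)
    (hθ : Real.sin θ ≠ 0) :
    ∃ P : Matrix (Fin 4) (Fin 4) ℝ, IsUnit P ∧
      Pᵀ * kerrStar 𝔪 a r θ * P
        = Matrix.diagonal ![(1 : ℝ), -1, -1, -1] := by
  have hc2 : Real.sqrt (r ^ 2 + a ^ 2 * Real.cos θ ^ 2) ^ 2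
      = r ^ 2 + a ^ 2 * Real.cos θ ^ 2 := Real.sq_sqrt hϱ.le
  have hc0 : Real.sqrt (r ^ 2 + a ^ 2 * Real.cos θ ^ 2) ≠ 0 := by
    positivity
  set c : ℝ := Real.sqrt (r ^ 2 + a ^ 2 * Real.cos θ ^ 2) with hc
  set D2 : Matrix (Fin 4) (Fin 4) ℝ :=
    Matrix.diagonal ![1, 1, 1 / c, 1 / (Real.sin θ * c)] with hD2
  have heq : (kerrP1 𝔪 a r θ * D2)ᵀ * kerrStar 𝔪 a r θ * (kerrP1 𝔪 a r θ * D2)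
      = Matrix.diagonal ![(1 : ℝ), -1, -1, -1] := by
    have key := kerrP1_congr 𝔪 a r θ hϱ
    have hD2T : D2ᵀ = D2 := by rw [hD2, Matrix.diagonal_transpose]
    rw [Matrix.transpose_mul, hD2T]
    calc D2 * (kerrP1 𝔪 a r θ)ᵀ * kerrStar 𝔪 a r θ * (kerrP1 𝔪 a r θ * D2)
        = D2 * ((kerrP1 𝔪 a r θ)ᵀ * kerrStar 𝔪 a r θ * kerrP1 𝔪 a r θ) * D2 := by
          noncomm_ring
      _ = D2 * Matrix.diagonal ![(1 : ℝ), -1, -(r ^ 2 + a ^ 2 * Real.cos θ ^ 2),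
            -(Real.sin θ ^ 2 * (r ^ 2 + a ^ 2 * Real.cos θ ^ 2))] * D2 := by rw [key]
      _ = Matrix.diagonal ![(1 : ℝ), -1, -1, -1] := by
          rw [hD2, Matrix.diagonal_mul_diagonal, Matrix.diagonal_mul_diagonal]
          refine congrArg Matrix.diagonal ?_
          funext i
          fin_cases i <;> simp <;> field_simp <;>
            (try linear_combination hc2) <;>
            (try linear_combination Real.sin θ ^ 2 * hc2) <;>
            (try linear_combination (-1 : ℝ) * hc2) <;>
            (try linear_combination (-(Real.sin θ ^ 2) : ℝ) * hc2) <;>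
            (try ring) <;> (try linarith [hc2]) <;> (try nlinarith [hc2])
  refine ⟨kerrP1 𝔪 a r θ * D2, ?_, heq⟩
  have hdet := congrArg Matrix.det heq
  rw [Matrix.det_mul, Matrix.det_mul, Matrix.det_transpose] at hdet
  simp only [Matrix.det_diagonal, Fin.prod_univ_four] at hdet
  rw [Matrix.isUnit_iff_isUnit_det, isUnit_iff_ne_zero]
  intro h0
  rw [h0] at hdet
  norm_num [Matrix.cons_val_two, Matrix.cons_val_three] at hdet
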